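/- Consider the linear regression model Y = Xᵀβ⁰ + ε, where ε has mean zero and is independent of the random vector X ∈ ℝᵖ, and β⁰ ∈ ℝᵖ. For τ ∈ (0,p], let δ⁰_τ ∈ ℝᵖ be defined coordinatewise by: δ⁰_{τ,j} = sign(β⁰_j) if |{i : |β⁰_i| > |β⁰_j|}| < ⌊τ⌋; δ⁰_{τ,j} = (τ−⌊τ⌋)·sign(β⁰_j) if |{i : |β⁰_i| > |β⁰_j|}| = ⌊τ⌋; and δ⁰_{τ,j} = 0 otherwise. Then δ⁰_τ is a global maximizer of E[(Y − (X − δ)ᵀβ⁰)²] over all constant vectors δ ∈ ℝᵖ subject to ‖δ‖₁ ≤ τ and ‖δ‖_∞ ≤ 1. -/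

import Mathlib

open MeasureTheory Set
open scoped Classical

/-- Greedy localizer for a linear model: `δ0 j = sign(β j)` for the `⌊τ⌋`
coordinates with largest `|β|`, `(τ - ⌊τ⌋) sign(β j)` at the `(⌊τ⌋+1)`-st
largest, and `0` otherwise. -/
noncomputable def greedyDelta {p : ℕ} (β : Fin p → ℝ) (τ : ℝ) : Fin p → ℝ :=
  fun j =>
    if (Finset.univ.filter fun i => |β j| < |β i|).card < ⌊τ⌋₊ then
      Real.sign (β j)
    else if (Finset.univ.filter fun i => |β j| < |β i|).card = ⌊τ⌋₊ then
      (τ - ⌊τ⌋₊) * Real.sign (β j)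
    else 0

/-- The rank of coordinate `j`: number of coordinates with strictly larger `|β|`. -/
noncomputable def rnk {p : ℕ} (β : Fin p → ℝ) (j : Fin p) : ℕ :=
  (Finset.univ.filter fun i => |β j| < |β i|).card

private lemma signMulSelf' (x : ℝ) : Real.sign x * x = |x| := by
  rcases lt_trichotomy x 0 with h | h | h
  · rw [Real.sign_of_neg h, abs_of_neg h]; ring
  · simp [h]
  · rw [Real.sign_of_pos h, abs_of_pos h]; ring

private lemma abs_sign_le (x : ℝ) : |Real.sign x| ≤ 1 := by
  rcases lt_trichotomy x 0 with h | h | h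
  · simp [Real.sign_of_neg h]
  · simp [h]
  · simp [Real.sign_of_pos h]

private lemma knapsack {p : ℕ} (v a c : Fin p → ℝ) (m : ℝ)
    (h1 : ∀ j, 0 ≤ (c j - a j) * (v j - m))
    (h2 : 0 ≤ m * ((∑ j, c j) - (∑ j, a j))) :
    ∑ j, a j * v j ≤ ∑ j, c j * v j := by
  have e1 : ∑ j, (c j - a j) * (v j - m)
      = (∑ j, c j * v j) - (∑ j, a j * v j) - m * (∑ j, c j) + m * (∑ j, a j) := by
    rw [Finset.mul_sum, Finset.mul_sum, ← Finset.sum_sub_distrib, ← Finset.sum_sub_distrib,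
      ← Finset.sum_add_distrib]
    exact Finset.sum_congr rfl fun j _ => by ring
  rw [mul_sub] at h2
  have h3 : 0 ≤ ∑ j, (c j - a j) * (v j - m) := Finset.sum_nonneg fun j _ => h1 j
  linarith

private lemma integral_sq_add_const {Ω : Type*} [MeasurableSpace Ω] (μ : Measure Ω)
    [IsProbabilityMeasure μ] (ε : Ω → ℝ) (hε : Integrable ε μ)
    (hεmean : ∫ ω, ε ω ∂μ = 0) (hε2 : Integrable (fun ω => ε ω ^ 2) μ) (C : ℝ) :
    ∫ ω, (ε ω + C) ^ 2 ∂μ = (∫ ω, ε ω ^ 2 ∂μ) + C ^ 2 := by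
  have h1 : (fun ω => (ε ω + C) ^ 2) = fun ω => (ε ω ^ 2 + (2 * C) * ε ω) + C ^ 2 := by
    funext ω; ring
  have hi1 : Integrable (fun ω => ε ω ^ 2 + 2 * C * ε ω) μ := hε2.add (hε.const_mul _)
  rw [h1, integral_add hi1 (integrable_const _), integral_add hε2 (hε.const_mul _),
      MeasureTheory.integral_const_mul, hεmean, integral_const]
  simp

private lemma rnk_mono {p : ℕ} {β : Fin p → ℝ} {i j : Fin p} (hij : |β j| < |β i|) :
    rnk β i < rnk β j := by
  apply Finset.card_lt_card
  rw [Finset.ssubset_iff_of_subset]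
  · exact ⟨i, by simp [hij], by simp⟩
  · intro l hl
    simp only [Finset.mem_filter, Finset.mem_univ, true_and] at hl ⊢
    exact hij.trans hl

private lemma rnk_lt {p : ℕ} (β : Fin p → ℝ) (j : Fin p) : rnk β j < p := by
  have h1 : (Finset.univ.filter fun i => |β j| < |β i|) ⊂ Finset.univ := by
    rw [Finset.ssubset_univ_iff]
    intro h
    have : j ∈ Finset.univ.filter fun i => |β j| < |β i| := by
      rw [h]; exact Finset.mem_univ j
    simp at this
  have := Finset.card_lt_card h1
  simpa [rnk] using this

/-- in the linear regression model `Y = Xᵀβ⁰ + ε` (with `ε`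
centered and independent of `X`), the greedy vector `greedyDelta β⁰ τ` is a
global maximizer of `E[(Y − (X − δ)ᵀβ⁰)²]` over constant vectors `δ` with
`‖δ‖₁ ≤ τ` and `‖δ‖_∞ ≤ 1`. -/
theorem greedy_selection_linear_regression
    {p : ℕ} {Ω : Type*} [MeasurableSpace Ω]
    (μ : Measure Ω) [IsProbabilityMeasure μ]
    (X : Ω → Fin p → ℝ) (ε : Ω → ℝ) (β : Fin p → ℝ)
    (Y : Ω → ℝ) (hY : ∀ ω, Y ω = (∑ j, X ω j * β j) + ε ω)
    (hX2 : ∀ j, Integrable (fun ω => (X ω j) ^ 2) μ)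
    (hY2 : Integrable (fun ω => (Y ω) ^ 2) μ)
    (hε : Integrable ε μ) (hεmean : ∫ ω, ε ω ∂μ = 0)
    (hε2 : Integrable (fun ω => (ε ω) ^ 2) μ)
    (hindep : ProbabilityTheory.IndepFun ε X μ)
    (hdistinct : ∀ i j : Fin p, i ≠ j → |β i| ≠ |β j|)
    (τ : ℝ) (hτ : τ ∈ Ioc (0:ℝ) p) :
    (∑ j, |greedyDelta β τ j| ≤ τ ∧ ∀ j, |greedyDelta β τ j| ≤ 1) ∧
      ∀ δ : Fin p → ℝ, (∑ j, |δ j|) ≤ τ → (∀ j, |δ j| ≤ 1) →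
        (∫ ω, (Y ω - ∑ j, (X ω j - δ j) * β j) ^ 2 ∂μ) ≤
          ∫ ω, (Y ω - ∑ j, (X ω j - greedyDelta β τ j) * β j) ^ 2 ∂μ := by
  classical
  obtain ⟨hτ0, hτp⟩ := hτ
  have hτ0' : (0:ℝ) ≤ τ := le_of_lt hτ0
  have hkτ : ((⌊τ⌋₊ : ℕ) : ℝ) ≤ τ := Nat.floor_le hτ0'
  have hτk1 : τ < (⌊τ⌋₊ : ℕ) + 1 := Nat.lt_floor_add_one τ
  have hkp : ⌊τ⌋₊ ≤ p := by exact_mod_cast hkτ.trans hτp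
  set k := ⌊τ⌋₊ with hkdef
  set θ := τ - (k : ℝ) with hθdef
  have hθ0 : 0 ≤ θ := by rw [hθdef]; linarith
  have hθ1 : θ < 1 := by rw [hθdef]; push_cast at hτk1 ⊢; linarith
  -- basic rank facts
  have hmono' : ∀ i j : Fin p, rnk β i < rnk β j → |β j| < |β i| := by
    intro i j h
    rcases lt_trichotomy (|β i|) (|β j|) with hc | hc | hc
    · exact absurd (rnk_mono hc) (by omega)
    · rcases eq_or_ne i j with rfl | hne
      · omega
      · exact absurd hc (hdistinct i j hne)
    · exact hc
  have hinj : Function.Injective (rnk β) := by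
    intro i j hij
    by_contra hne
    rcases (hdistinct i j hne).lt_or_gt with h | h
    · exact absurd (rnk_mono h) (by omega)
    · exact absurd (rnk_mono h) (by omega)
  have hRinj : Function.Injective (fun j : Fin p => (⟨rnk β j, rnk_lt β j⟩ : Fin p)) := by
    intro i j h
    exact hinj (by simpa [Fin.mk.injEq] using h)
  have hRsurj : Function.Surjective (fun j : Fin p => (⟨rnk β j, rnk_lt β j⟩ : Fin p)) :=
    Finite.surjective_of_injective hRinj
  have hsurj : ∀ b : ℕ, b < p → ∃ j, rnk β j = b := by
    intro b hb
    obtain ⟨j, hj⟩ := hRsurj ⟨b, hb⟩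
    exact ⟨j, by simpa [Fin.mk.injEq] using congrArg Fin.val hj⟩
  have hcount : ∀ k' : ℕ, k' ≤ p →
      ((Finset.univ.filter fun j => rnk β j < k').card : ℕ) = k' := by
    intro k' hk'
    rw [← Finset.card_range k']
    apply Finset.card_bij (fun (j : Fin p) _ => rnk β j)
    · intro a ha
      simp only [Finset.mem_filter, Finset.mem_univ, true_and] at ha
      simpa [Finset.mem_range] using ha
    · intro a ha b hb h
      exact hinj h
    · intro b hb
      rw [Finset.mem_range] at hb
      obtain ⟨j, hj⟩ := hsurj b (lt_of_lt_of_le hb hk')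
      exact ⟨j, by simp [hj, hb], hj⟩
  -- the coefficient profile of the greedy vector
  set cf : Fin p → ℝ := fun j => if rnk β j < k then 1 else if rnk β j = k then θ else 0
    with hcfdef
  have hgd : ∀ j, greedyDelta β τ j = cf j * Real.sign (β j) := by
    intro j
    show (if rnk β j < ⌊τ⌋₊ then Real.sign (β j)
      else if rnk β j = ⌊τ⌋₊ then (τ - ⌊τ⌋₊) * Real.sign (β j) else 0) = _
    rw [hcfdef]
    simp only [← hkdef, ← hθdef]
    split_ifs <;> ring
  have hcf0 : ∀ j, 0 ≤ cf j := by
    intro j; rw [hcfdef]; dsimp only; split_ifs <;> norm_num [hθ0]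
  have hcf1 : ∀ j, cf j ≤ 1 := by
    intro j; rw [hcfdef]; dsimp only; split_ifs <;> norm_num [le_of_lt hθ1]
  have habs_le : ∀ j, |greedyDelta β τ j| ≤ cf j := by
    intro j
    rw [hgd j, abs_mul, abs_of_nonneg (hcf0 j)]
    calc cf j * |Real.sign (β j)| ≤ cf j * 1 :=
          mul_le_mul_of_nonneg_left (abs_sign_le _) (hcf0 j)
      _ = cf j := mul_one _
  -- the sum of the coefficient profile is at most τ
  have hsumcf : (∑ j, cf j) ≤ τ ∧ ((k < p) → (∑ j, cf j) = τ) := by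
    rcases lt_or_ge k p with hklt | hkge
    · obtain ⟨j0, hj0⟩ := hsurj k hklt
      have hsplit : ∀ j, cf j = (if rnk β j < k then (1:ℝ) else 0)
          + (if rnk β j = k then θ else 0) := by
        intro j
        rw [hcfdef]; dsimp only
        split_ifs with h1 h2
        · exact absurd h2 (by omega)
        · ring
        · ring
        · ring
      have hfe : Finset.univ.filter (fun j => rnk β j = k) = {j0} := by
        ext j
        simp only [Finset.mem_filter, Finset.mem_univ, true_and, Finset.mem_singleton]
        constructor
        · intro h; exact hinj (h.trans hj0.symm)
        · rintro rfl; exact hj0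
      have heq : (∑ j, cf j) = τ := by
        calc (∑ j, cf j)
            = (∑ j, if rnk β j < k then (1:ℝ) else 0)
              + (∑ j, if rnk β j = k then θ else 0) := by
              rw [← Finset.sum_add_distrib]
              exact Finset.sum_congr rfl fun j _ => hsplit j
          _ = ((Finset.univ.filter fun j => rnk β j < k).card : ℝ)
              + ((Finset.univ.filter fun j => rnk β j = k).card : ℝ) * θ := by
              rw [Finset.sum_boole]
              congr 1
              rw [← Finset.sum_filter, Finset.sum_const, nsmul_eq_mul]
          _ = (k : ℝ) + θ := by rw [hcount k (le_of_lt hklt), hfe]; simp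
          _ = τ := by rw [hθdef]; ring
      exact ⟨le_of_eq heq, fun _ => heq⟩
    · have hkeq : k = p := le_antisymm hkp hkge
      have hτeq : τ = p := by
        have : (p : ℝ) ≤ τ := by rw [← hkeq] at *; exact hkτ
        linarith
      have hcfall : ∀ j, cf j = 1 := by
        intro j
        rw [hcfdef]; dsimp only
        rw [if_pos (by rw [hkeq]; exact rnk_lt β j)]
      have : (∑ j, cf j) = τ := by
        rw [hτeq]; simp [hcfall]
      exact ⟨le_of_eq this, fun _ => this⟩
  -- part 1: constraints
  have hcon1 : ∑ j, |greedyDelta β τ j| ≤ τ :=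
    le_trans (Finset.sum_le_sum fun j _ => habs_le j) hsumcf.1
  have hcon2 : ∀ j, |greedyDelta β τ j| ≤ 1 := fun j => le_trans (habs_le j) (hcf1 j)
  refine ⟨⟨hcon1, hcon2⟩, ?_⟩
  -- part 2: optimality
  intro δ hδ1 hδinf
  -- rewrite both objectives
  have key : ∀ δ' : Fin p → ℝ,
      (∫ ω, (Y ω - ∑ j, (X ω j - δ' j) * β j) ^ 2 ∂μ)
        = (∫ ω, ε ω ^ 2 ∂μ) + (∑ j, δ' j * β j) ^ 2 := by
    intro δ'
    have hfun : ∀ ω, Y ω - ∑ j, (X ω j - δ' j) * β j = ε ω + ∑ j, δ' j * β j := by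
      intro ω
      rw [hY ω]
      have : ∑ j, (X ω j - δ' j) * β j = (∑ j, X ω j * β j) - ∑ j, δ' j * β j := by
        rw [← Finset.sum_sub_distrib]
        exact Finset.sum_congr rfl fun j _ => by ring
      rw [this]; ring
    calc (∫ ω, (Y ω - ∑ j, (X ω j - δ' j) * β j) ^ 2 ∂μ)
        = ∫ ω, (ε ω + ∑ j, δ' j * β j) ^ 2 ∂μ := by
          exact integral_congr_ae (Filter.Eventually.of_forall fun ω => by dsimp only; rw [hfun ω])
      _ = (∫ ω, ε ω ^ 2 ∂μ) + (∑ j, δ' j * β j) ^ 2 :=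
          integral_sq_add_const μ ε hε hεmean hε2 _
  rw [key δ, key (greedyDelta β τ)]
  have hgsum : (∑ j, greedyDelta β τ j * β j) = ∑ j, cf j * |β j| := by
    refine Finset.sum_congr rfl fun j _ => ?_
    rw [hgd j, mul_assoc, signMulSelf']
  -- the knapsack bound
  have hknap : (∑ j, |δ j| * |β j|) ≤ ∑ j, cf j * |β j| := by
    rcases lt_or_ge k p with hklt | hkge
    · obtain ⟨j0, hj0⟩ := hsurj k hklt
      apply knapsack _ _ _ (|β j0|)
      · intro j
        rcases lt_trichotomy (rnk β j) k with h | h | h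
        · have h1 : cf j = 1 := by rw [hcfdef]; exact if_pos h
          have h2 : |β j0| < |β j| := hmono' j j0 (by omega)
          have := hδinf j
          nlinarith
        · have : j = j0 := hinj (h.trans hj0.symm)
          rw [this]
          simp
        · have h1 : cf j = 0 := by
            rw [hcfdef]; dsimp only; rw [if_neg (by omega), if_neg (by omega)]
          have h2 : |β j| < |β j0| := hmono' j0 j (by omega)
          have := abs_nonneg (δ j)
          nlinarith
      · apply mul_nonneg (abs_nonneg _)
        rw [sub_nonneg, hsumcf.2 hklt]
        exact hδ1
    · apply knapsack _ _ _ 0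
      · intro j
        have h1 : cf j = 1 := by
          rw [hcfdef]; dsimp only
          rw [if_pos (lt_of_lt_of_le (rnk_lt β j) hkge)]
        have h2 := hδinf j
        have h3 := abs_nonneg (β j)
        nlinarith
      · simp
  have habs : |∑ j, δ j * β j| ≤ ∑ j, cf j * |β j| := by
    calc |∑ j, δ j * β j| ≤ ∑ j, |δ j * β j| := Finset.abs_sum_le_sum_abs _ _
      _ = ∑ j, |δ j| * |β j| := Finset.sum_congr rfl fun j _ => abs_mul _ _
      _ ≤ ∑ j, cf j * |β j| := hknap
  rw [hgsum]
  have hsq : (∑ j, δ j * β j) ^ 2 ≤ (∑ j, cf j * |β j|) ^ 2 := by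
    rcases abs_le.mp habs with ⟨hl, hr⟩
    exact sq_le_sq' hl hr
  linarith
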